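/- For fixed ξ₁ < ξ₂ and σ > 0, the truncated-Gaussian mean function f(z) = z + σ·(φ((ξ₁−z)/σ) − φ((ξ₂−z)/σ))/(Φ((ξ₂−z)/σ) − Φ((ξ₁−z)/σ)) satisfies lim_{z→−∞} f(z) = ξ₁ and lim_{z→+∞} f(z) = ξ₂. -/

import Mathlib

open Real MeasureTheory Filter

noncomputable def stdPhi (z : ℝ) : ℝ := (Real.sqrt (2 * Real.pi))⁻¹ * Real.exp (-z ^ 2 / 2)

noncomputable def stdCDF (z : ℝ) : ℝ := ∫ t in Set.Iic z, stdPhi t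

/-!
With `a = (ξ₁ - z) / σ` and `b = (ξ₂ - z) / σ`, the quotient equals `σ` times the mean `m(a, b)`
of the standard normal conditioned on `[a, b]`, since `(-φ)' = t φ`; hence `f z - ξ₁ = σ (m(a, b) - a)`.
Writing `b = a + c` and `φ(a + s) = φ(a) e^{-as - s²/2}`, the gap `m(a, a + c) - a` is the mean of `s`
under the weight `e^{-as - s²/2}` on `[0, c]`. It is `O(1/a)` as `a → ∞`: the weighted integral of `s`
is at most `∫ s e^{-as} ≤ 1/a²`, while the weight has mass at least `e^{-3/2}/a` on `[0, 1/a]`.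
The limit at `+∞` follows by the reflection `m(-b, -a) = -m(a, b)`.
-/

lemma stdPhi_pos (t : ℝ) : 0 < stdPhi t := by unfold stdPhi; positivity

@[fun_prop] lemma continuous_stdPhi : Continuous stdPhi := by unfold stdPhi; fun_prop

lemma stdPhi_neg (t : ℝ) : stdPhi (-t) = stdPhi t := by unfold stdPhi; rw [neg_sq]

lemma stdPhi_add (a s : ℝ) : stdPhi (a + s) = stdPhi a * exp (-(a * s) - s ^ 2 / 2) := by
  unfold stdPhi
  rw [mul_assoc, ← exp_add]
  ring_nf

lemma integrable_stdPhi : Integrable stdPhi := by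
  have h := (integrable_exp_neg_mul_sq (b := 1 / 2) (by norm_num)).const_mul (√(2 * π))⁻¹
  refine h.congr (.of_forall fun t => ?_)
  simp only [stdPhi]
  ring_nf

lemma stdCDF_sub_stdCDF (a b : ℝ) : stdCDF b - stdCDF a = ∫ t in a..b, stdPhi t :=
  intervalIntegral.integral_Iic_sub_Iic integrable_stdPhi.integrableOn
    integrable_stdPhi.integrableOn

lemma hasDerivAt_stdPhi (t : ℝ) : HasDerivAt stdPhi (-t * stdPhi t) t := by
  have h : HasDerivAt (fun u : ℝ => -u ^ 2 / 2) (-t) t := by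
    simpa using ((hasDerivAt_pow 2 t).neg.div_const 2).congr_deriv (by ring)
  exact (h.exp.const_mul _).congr_deriv (by simp only [stdPhi]; ring)

lemma integral_mul_stdPhi (a b : ℝ) : ∫ t in a..b, t * stdPhi t = stdPhi a - stdPhi b := by
  rw [intervalIntegral.integral_eq_sub_of_hasDerivAt
    (fun t _ => (hasDerivAt_stdPhi t).neg.congr_deriv (by ring))
    (by apply Continuous.intervalIntegrable; fun_prop), Pi.neg_apply, Pi.neg_apply]
  ring

lemma integral_stdPhi_pos {a b : ℝ} (hab : a < b) : 0 < ∫ t in a..b, stdPhi t :=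
  intervalIntegral.intervalIntegral_pos_of_pos (continuous_stdPhi.intervalIntegrable a b)
    stdPhi_pos hab

noncomputable def truncGaussMean (a b : ℝ) : ℝ :=
  (∫ t in a..b, t * stdPhi t) / ∫ t in a..b, stdPhi t

lemma truncGaussMean_eq (a b : ℝ) :
    truncGaussMean a b = (stdPhi a - stdPhi b) / (stdCDF b - stdCDF a) := by
  rw [truncGaussMean, integral_mul_stdPhi, stdCDF_sub_stdCDF]

lemma truncGaussMean_neg (a b : ℝ) : truncGaussMean (-b) (-a) = -truncGaussMean a b := by
  simp only [truncGaussMean, ← intervalIntegral.integral_comp_neg, stdPhi_neg, neg_mul,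
    intervalIntegral.integral_neg, neg_div]

lemma truncGaussMean_sub_left {a b : ℝ} (hab : a < b) :
    truncGaussMean a b - a = (∫ t in a..b, (t - a) * stdPhi t) / ∫ t in a..b, stdPhi t := by
  have hint : ∀ f : ℝ → ℝ, Continuous f → IntervalIntegrable f volume a b :=
    fun f hf => hf.intervalIntegrable a b
  simp_rw [sub_mul]
  rw [intervalIntegral.integral_sub (hint _ (by fun_prop)) (hint _ (by fun_prop)),
    intervalIntegral.integral_const_mul, truncGaussMean]
  field_simp [(integral_stdPhi_pos hab).ne']

lemma left_le_truncGaussMean {a b : ℝ} (hab : a < b) : a ≤ truncGaussMean a b := by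
  rw [← sub_nonneg, truncGaussMean_sub_left hab]
  refine div_nonneg (intervalIntegral.integral_nonneg hab.le fun t ht => ?_)
    (integral_stdPhi_pos hab).le
  exact mul_nonneg (sub_nonneg.2 ht.1) (stdPhi_pos t).le

lemma truncGaussMean_add_sub_left (a : ℝ) {c : ℝ} (hc : 0 < c) :
    truncGaussMean a (a + c) - a =
      (∫ s in 0..c, s * exp (-(a * s) - s ^ 2 / 2)) / ∫ s in 0..c, exp (-(a * s) - s ^ 2 / 2) := by
  have hshift : ∀ g : ℝ → ℝ, ∫ t in a..a + c, g t = ∫ s in 0..c, g (a + s) := fun g => by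
    rw [intervalIntegral.integral_comp_add_left, add_zero]
  rw [truncGaussMean_sub_left (lt_add_of_pos_right a hc), hshift, hshift]
  simp_rw [add_sub_cancel_left, stdPhi_add, mul_left_comm _ (stdPhi a)]
  rw [intervalIntegral.integral_const_mul, intervalIntegral.integral_const_mul,
    mul_div_mul_left _ _ (stdPhi_pos a).ne']

lemma integral_mul_exp_neg_mul_sub_sq_le {a c : ℝ} (ha : 0 < a) (hc : 0 ≤ c) :
    ∫ s in 0..c, s * exp (-(a * s) - s ^ 2 / 2) ≤ 1 / a ^ 2 := calc
  _ ≤ ∫ s in 0..c, s ^ 1 * exp (-(a * s)) := by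
    refine intervalIntegral.integral_mono_on hc (Continuous.intervalIntegrable (by fun_prop) _ _)
      (Continuous.intervalIntegrable (by fun_prop) _ _) fun s hs => ?_
    rw [pow_one]
    gcongr
    · exact hs.1
    · nlinarith
  _ ≤ 1 / a ^ 2 := by simpa using intervalIntegral_pow_mul_exp_neg_le (k := 1) hc ha

lemma exp_neg_div_le_integral_exp_neg_mul_sub_sq {a c : ℝ} (ha : 1 ≤ a) (hac : a⁻¹ ≤ c) :
    exp (-(3 / 2)) / a ≤ ∫ s in 0..c, exp (-(a * s) - s ^ 2 / 2) := calc
  _ = ∫ _ in 0..a⁻¹, exp (-(3 / 2)) := by simp [div_eq_inv_mul]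
  _ ≤ ∫ s in 0..a⁻¹, exp (-(a * s) - s ^ 2 / 2) := by
    refine intervalIntegral.integral_mono_on (by positivity) intervalIntegrable_const
      (Continuous.intervalIntegrable (by fun_prop) _ _) fun s hs => ?_
    have has : a * s ≤ 1 := by
      calc a * s ≤ a * a⁻¹ := by gcongr; exact hs.2
        _ = 1 := mul_inv_cancel₀ (by positivity)
    have hs1 : s ≤ 1 := hs.2.trans (inv_le_one_of_one_le₀ ha)
    gcongr
    nlinarith [hs.1]
  _ ≤ ∫ s in 0..c, exp (-(a * s) - s ^ 2 / 2) :=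
    intervalIntegral.integral_mono_interval le_rfl (by positivity) hac
      (.of_forall fun _ => (exp_pos _).le) (Continuous.intervalIntegrable (by fun_prop) _ _)

lemma truncGaussMean_add_sub_left_le {a c : ℝ} (ha : 1 ≤ a) (hac : a⁻¹ ≤ c) :
    truncGaussMean a (a + c) - a ≤ exp (3 / 2) / a := by
  have ha0 : 0 < a := zero_lt_one.trans_le ha
  have hc : 0 < c := (inv_pos.2 ha0).trans_le hac
  rw [truncGaussMean_add_sub_left a hc]
  calc _ ≤ (1 / a ^ 2) / (exp (-(3 / 2)) / a) :=
        div_le_div₀ (by positivity) (integral_mul_exp_neg_mul_sub_sq_le ha0 hc.le)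
          (by positivity) (exp_neg_div_le_integral_exp_neg_mul_sub_sq ha hac)
    _ = exp (3 / 2) / a := by
        rw [exp_neg]
        field_simp

lemma tendsto_truncGaussMean_add_sub_left {c : ℝ} (hc : 0 < c) :
    Tendsto (fun a => truncGaussMean a (a + c) - a) atTop (nhds 0) := by
  refine tendsto_of_tendsto_of_tendsto_of_le_of_le' tendsto_const_nhds
    ((tendsto_const_nhds (x := exp (3 / 2))).div_atTop tendsto_id) (.of_forall fun a => ?_) ?_
  · exact sub_nonneg.2 (left_le_truncGaussMean (lt_add_of_pos_right a hc))
  · filter_upwards [eventually_ge_atTop 1, eventually_ge_atTop c⁻¹] with a ha hac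
    exact truncGaussMean_add_sub_left_le ha (inv_le_of_inv_le₀ hc hac)

theorem truncated_gaussian_mean_limits (ξ₁ ξ₂ σ : ℝ) (hξ : ξ₁ < ξ₂) (hσ : 0 < σ) :
    Tendsto (fun z : ℝ =>
      z + σ * (stdPhi ((ξ₁ - z) / σ) - stdPhi ((ξ₂ - z) / σ)) /
        (stdCDF ((ξ₂ - z) / σ) - stdCDF ((ξ₁ - z) / σ))) atBot (nhds ξ₁) ∧
    Tendsto (fun z : ℝ =>
      z + σ * (stdPhi ((ξ₁ - z) / σ) - stdPhi ((ξ₂ - z) / σ)) /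
        (stdCDF ((ξ₂ - z) / σ) - stdCDF ((ξ₁ - z) / σ))) atTop (nhds ξ₂) := by
  have hlim := tendsto_truncGaussMean_add_sub_left (div_pos (sub_pos.2 hξ) hσ)
  simp_rw [mul_div_assoc, ← truncGaussMean_eq]
  constructor
  · have hα : Tendsto (fun z => (ξ₁ - z) / σ) atBot atTop :=
      (tendsto_atTop_add_const_left _ ξ₁ tendsto_neg_atBot_atTop).atTop_div_const hσ
    have h := ((hlim.comp hα).const_mul σ).const_add ξ₁
    rw [mul_zero, add_zero] at h
    refine h.congr fun z => ?_
    rw [Function.comp_apply, show (ξ₂ - z) / σ = (ξ₁ - z) / σ + (ξ₂ - ξ₁) / σ by ring, mul_sub,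
      mul_div_cancel₀ _ hσ.ne']
    ring
  · have hβ : Tendsto (fun z => (z - ξ₂) / σ) atTop atTop :=
      (tendsto_atTop_add_const_right _ _ tendsto_id).atTop_div_const hσ
    have h := ((hlim.comp hβ).const_mul σ).const_sub ξ₂
    rw [mul_zero, sub_zero] at h
    refine h.congr fun z => ?_
    rw [Function.comp_apply, show (ξ₁ - z) / σ = -((z - ξ₂) / σ + (ξ₂ - ξ₁) / σ) by ring,
      show (ξ₂ - z) / σ = -((z - ξ₂) / σ) by ring, truncGaussMean_neg, mul_sub,
      mul_div_cancel₀ _ hσ.ne']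
    ring
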